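/- Let n ≥ 1 and let x₁,…,x_n be real numbers, and define the empirical characteristic function φ̂(v) = (1/n)∑ₜ e^{ivxₜ}. Then (1/π) ∫_ℝ (1 − |φ̂(v)|²)/v² dv = (1/n²) ∑_{t=1}^n ∑_{s=1}^n |xₜ − x_s|. -/

import Mathlib

/-!
Expanding `|φ̂(v)|² = n⁻² ∑ₜ ∑ₛ cos ((xₜ - xₛ) v)` reduces the claim to
`∫ (1 - cos (a v)) / v² dv = π |a|`. By evenness it suffices to integrate over `v > 0`, where
`1 / v² = ∫₀^∞ t e^{-tv} dt`. Swapping the integrals (Tonelli), the inner integral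
`∫₀^∞ (1 - cos (a v)) e^{-tv} dv = 1/t - t/(t² + a²)` is the real part of an exponential integral,
and what is left is `∫₀^∞ a² / (t² + a²) dt = π |a| / 2`.
-/

open MeasureTheory Set Real

lemma integrableOn_exp_neg_mul_Ioi {t : ℝ} (ht : 0 < t) :
    IntegrableOn (fun v => exp (-(t * v))) (Ioi 0) := by
  simpa only [neg_mul] using exp_neg_integrableOn_Ioi 0 ht

lemma integral_exp_neg_mul_Ioi {t : ℝ} (ht : 0 < t) :
    ∫ v in Ioi 0, exp (-(t * v)) = 1 / t := by
  simpa [neg_div_neg_eq] using integral_exp_mul_Ioi (neg_neg_of_pos ht) 0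

lemma exp_neg_mul_mul_cos_eq_re (t a v : ℝ) :
    exp (-(t * v)) * cos (a * v) = (Complex.exp ((-t + a * Complex.I) * v)).re := by
  rw [Complex.exp_re]
  simp

lemma integrableOn_exp_neg_mul_mul_cos_Ioi {t : ℝ} (ht : 0 < t) (a : ℝ) :
    IntegrableOn (fun v => exp (-(t * v)) * cos (a * v)) (Ioi 0) := by
  simp_rw [exp_neg_mul_mul_cos_eq_re]
  exact (integrableOn_exp_mul_complex_Ioi (by simpa using ht) 0).re

lemma integral_exp_neg_mul_mul_cos_Ioi {t : ℝ} (ht : 0 < t) (a : ℝ) :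
    ∫ v in Ioi 0, exp (-(t * v)) * cos (a * v) = t / (t ^ 2 + a ^ 2) := by
  simp_rw [exp_neg_mul_mul_cos_eq_re, ← RCLike.re_to_complex]
  rw [integral_re (integrableOn_exp_mul_complex_Ioi (by simpa using ht) 0),
    integral_exp_mul_complex_Ioi (by simpa using ht)]
  simp [Complex.div_re, Complex.normSq_apply]
  field_simp

lemma integrableOn_one_sub_cos_mul_exp_neg_mul_Ioi {t : ℝ} (ht : 0 < t) (a : ℝ) :
    IntegrableOn (fun v => (1 - cos (a * v)) * exp (-(t * v))) (Ioi 0) := by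
  refine ((integrableOn_exp_neg_mul_Ioi ht).sub
    (integrableOn_exp_neg_mul_mul_cos_Ioi ht a)).congr_fun (fun v _ => ?_) measurableSet_Ioi
  simp only [Pi.sub_apply]
  ring

lemma integral_one_sub_cos_mul_exp_neg_mul_Ioi {t : ℝ} (ht : 0 < t) (a : ℝ) :
    ∫ v in Ioi 0, (1 - cos (a * v)) * exp (-(t * v)) = a ^ 2 / (t * (t ^ 2 + a ^ 2)) := by
  simp_rw [sub_mul, one_mul, mul_comm (cos _)]
  rw [integral_sub (integrableOn_exp_neg_mul_Ioi ht) (integrableOn_exp_neg_mul_mul_cos_Ioi ht a),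
    integral_exp_neg_mul_Ioi ht, integral_exp_neg_mul_mul_cos_Ioi ht]
  field_simp
  ring

lemma lintegral_mul_exp_neg_mul_Ioi {b : ℝ} (hb : 0 < b) :
    ∫⁻ t in Ioi 0, ENNReal.ofReal (t * exp (-(b * t))) = ENNReal.ofReal (1 / b ^ 2) := by
  have h := integral_rpow_mul_exp_neg_mul_Ioi (a := 2) (r := b) two_pos hb
  norm_num at h
  have hint : IntegrableOn (fun t => t * exp (-(b * t))) (Ioi 0) :=
    Integrable.of_integral_ne_zero (by rw [h]; positivity)
  rw [← ofReal_integral_eq_lintegral_ofReal hint, h, one_div]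
  filter_upwards [self_mem_ae_restrict measurableSet_Ioi] with t ht
  exact mul_nonneg (le_of_lt ht) (exp_pos _).le

lemma sq_div_sq_add_sq_eq_inv_one_add_sq {a : ℝ} (ha : a ≠ 0) (t : ℝ) :
    a ^ 2 / (t ^ 2 + a ^ 2) = (1 + (|a|⁻¹ * t) ^ 2)⁻¹ := by
  rw [mul_pow, inv_pow, sq_abs]
  field_simp
  ring

lemma integrableOn_sq_div_sq_add_sq_Ioi (a : ℝ) :
    IntegrableOn (fun t => a ^ 2 / (t ^ 2 + a ^ 2)) (Ioi 0) := by
  rcases eq_or_ne a 0 with rfl | ha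
  · simp
  simp_rw [sq_div_sq_add_sq_eq_inv_one_add_sq ha]
  exact (integrable_inv_one_add_sq.comp_mul_left' (by positivity)).integrableOn

lemma integral_sq_div_sq_add_sq_Ioi (a : ℝ) :
    ∫ t in Ioi 0, a ^ 2 / (t ^ 2 + a ^ 2) = π * |a| / 2 := by
  rcases eq_or_ne a 0 with rfl | ha
  · simp
  simp_rw [sq_div_sq_add_sq_eq_inv_one_add_sq ha]
  rw [integral_comp_mul_left_Ioi (fun s => (1 + s ^ 2)⁻¹) 0 (by positivity), mul_zero,
    integral_Ioi_inv_one_add_sq, arctan_zero, inv_inv, smul_eq_mul]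
  ring

lemma lintegral_one_sub_cos_div_sq_Ioi (a : ℝ) :
    ∫⁻ v in Ioi 0, ENNReal.ofReal ((1 - cos (a * v)) / v ^ 2) = ENNReal.ofReal (π * |a| / 2) := by
  set F : ℝ → ℝ → ENNReal := fun v t => ENNReal.ofReal ((1 - cos (a * v)) * (t * exp (-(v * t))))
  have hF : Measurable (Function.uncurry F) := by
    apply ENNReal.measurable_ofReal.comp
    apply Continuous.measurable
    fun_prop
  have one_sub_cos_nonneg : ∀ v, 0 ≤ 1 - cos (a * v) := fun v => sub_nonneg.2 (cos_le_one _)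
  have lintegral_in_t : ∀ v ∈ Ioi (0 : ℝ),
      ∫⁻ t in Ioi 0, F v t = ENNReal.ofReal ((1 - cos (a * v)) / v ^ 2) := by
    intro v (hv : 0 < v)
    simp only [F, ENNReal.ofReal_mul (one_sub_cos_nonneg v)]
    rw [lintegral_const_mul' _ _ ENNReal.ofReal_ne_top, lintegral_mul_exp_neg_mul_Ioi hv,
      ← ENNReal.ofReal_mul (one_sub_cos_nonneg v), mul_one_div]
  have lintegral_in_v : ∀ t ∈ Ioi (0 : ℝ),
      ∫⁻ v in Ioi 0, F v t = ENNReal.ofReal (a ^ 2 / (t ^ 2 + a ^ 2)) := by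
    intro t (ht : 0 < t)
    have hF_eq : (fun v => F v t) =
        fun v => ENNReal.ofReal (t * ((1 - cos (a * v)) * exp (-(t * v)))) := by
      ext v
      simp only [F]
      ring_nf
    rw [hF_eq, ← ofReal_integral_eq_lintegral_ofReal
      ((integrableOn_one_sub_cos_mul_exp_neg_mul_Ioi ht a).const_mul t)
      (ae_of_all _ fun v => by have := one_sub_cos_nonneg v; positivity),
      integral_const_mul, integral_one_sub_cos_mul_exp_neg_mul_Ioi ht]
    field_simp
  calc ∫⁻ v in Ioi 0, ENNReal.ofReal ((1 - cos (a * v)) / v ^ 2)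
      = ∫⁻ v in Ioi 0, ∫⁻ t in Ioi 0, F v t :=
        (setLIntegral_congr_fun measurableSet_Ioi lintegral_in_t).symm
    _ = ∫⁻ t in Ioi 0, ∫⁻ v in Ioi 0, F v t := lintegral_lintegral_swap hF.aemeasurable
    _ = ∫⁻ t in Ioi 0, ENNReal.ofReal (a ^ 2 / (t ^ 2 + a ^ 2)) :=
        setLIntegral_congr_fun measurableSet_Ioi lintegral_in_v
    _ = ENNReal.ofReal (π * |a| / 2) := by
      rw [← ofReal_integral_eq_lintegral_ofReal (integrableOn_sq_div_sq_add_sq_Ioi a)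
        (ae_of_all _ fun t => by positivity), integral_sq_div_sq_add_sq_Ioi]

lemma one_sub_cos_div_sq_nonneg (a v : ℝ) : 0 ≤ (1 - cos (a * v)) / v ^ 2 :=
  div_nonneg (sub_nonneg.2 (cos_le_one _)) (sq_nonneg v)

lemma measurable_one_sub_cos_div_sq (a : ℝ) :
    Measurable fun v : ℝ => (1 - cos (a * v)) / v ^ 2 := by
  fun_prop

lemma integrableOn_one_sub_cos_div_sq_Ioi (a : ℝ) :
    IntegrableOn (fun v => (1 - cos (a * v)) / v ^ 2) (Ioi 0) := by
  refine (lintegral_ofReal_ne_top_iff_integrable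
    (measurable_one_sub_cos_div_sq a).aestronglyMeasurable
    (ae_of_all _ (one_sub_cos_div_sq_nonneg a))).1 ?_
  rw [lintegral_one_sub_cos_div_sq_Ioi]
  exact ENNReal.ofReal_ne_top

lemma integral_one_sub_cos_div_sq_Ioi (a : ℝ) :
    ∫ v in Ioi 0, (1 - cos (a * v)) / v ^ 2 = π * |a| / 2 := by
  rw [integral_eq_lintegral_of_nonneg_ae (ae_of_all _ (one_sub_cos_div_sq_nonneg a))
    (measurable_one_sub_cos_div_sq a).aestronglyMeasurable,
    lintegral_one_sub_cos_div_sq_Ioi, ENNReal.toReal_ofReal (by positivity)]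

lemma integrable_comp_abs_of_integrableOn_Ioi {E : Type*} [NormedAddCommGroup E] {f : ℝ → E}
    (hf : IntegrableOn f (Ioi 0)) : Integrable fun x => f |x| := by
  have hf' : IntegrableOn f (Ioi (-0)) := by rwa [neg_zero]
  have hIio : IntegrableOn (fun x => f |x|) (Iio 0) :=
    hf'.comp_neg_Iio.congr_fun (fun x hx => by simp only [abs_of_neg (mem_Iio.1 hx)])
      measurableSet_Iio
  have hIci : IntegrableOn (fun x => f |x|) (Ici 0) :=
    (integrableOn_Ici_iff_integrableOn_Ioi (f := fun x => f |x|)).2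
      (hf.congr_fun (fun x hx => by rw [abs_of_pos hx]) measurableSet_Ioi)
  rw [← integrableOn_univ, ← Iio_union_Ici]
  exact hIio.union hIci

lemma one_sub_cos_mul_abs_div_sq (a v : ℝ) :
    (1 - cos (a * |v|)) / |v| ^ 2 = (1 - cos (a * v)) / v ^ 2 := by
  rcases abs_choice v with h | h
  · rw [h]
  · rw [h, mul_neg, cos_neg, neg_sq]

theorem integrable_one_sub_cos_div_sq (a : ℝ) :
    Integrable fun v : ℝ => (1 - cos (a * v)) / v ^ 2 := by
  simpa only [one_sub_cos_mul_abs_div_sq] using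
    integrable_comp_abs_of_integrableOn_Ioi (integrableOn_one_sub_cos_div_sq_Ioi a)

theorem integral_one_sub_cos_div_sq (a : ℝ) :
    ∫ v, (1 - cos (a * v)) / v ^ 2 = π * |a| := by
  have h := integral_comp_abs (f := fun v => (1 - cos (a * v)) / v ^ 2)
  simp only [one_sub_cos_mul_abs_div_sq] at h
  rw [h, integral_one_sub_cos_div_sq_Ioi]
  ring

lemma norm_sum_exp_I_mul_sq {ι : Type*} [Fintype ι] (y : ι → ℝ) :
    ‖∑ t, Complex.exp (Complex.I * y t)‖ ^ 2 = ∑ t, ∑ s, cos (y t - y s) := by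
  rw [← Complex.normSq_eq_norm_sq, ← Complex.ofReal_re (Complex.normSq _), ← Complex.mul_conj,
    map_sum, Finset.sum_mul_sum, Complex.re_sum]
  refine Finset.sum_congr rfl fun t _ => ?_
  rw [Complex.re_sum]
  refine Finset.sum_congr rfl fun s _ => ?_
  rw [← Complex.exp_conj, ← Complex.exp_add, map_mul, Complex.conj_I, Complex.conj_ofReal,
    show Complex.I * y t + -Complex.I * y s = ((y t - y s : ℝ) : ℂ) * Complex.I by push_cast; ring,
    Complex.exp_ofReal_mul_I_re]

lemma one_sub_norm_mean_exp_I_mul_sq {ι : Type*} [Fintype ι] [Nonempty ι] (y : ι → ℝ) :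
    1 - ‖(1 / Fintype.card ι : ℂ) * ∑ t, Complex.exp (Complex.I * y t)‖ ^ 2
      = 1 / (Fintype.card ι : ℝ) ^ 2 * ∑ t, ∑ s, (1 - cos (y t - y s)) := by
  have hcard : (Fintype.card ι : ℝ) ≠ 0 := by positivity
  rw [norm_mul, mul_pow, norm_sum_exp_I_mul_sq]
  simp only [Finset.sum_sub_distrib, Finset.sum_const, Finset.card_univ, nsmul_eq_mul]
  simp only [one_div, norm_inv, RCLike.norm_natCast, inv_pow, mul_one]
  field_simp

/-- Empirical counterpart: for real numbers `x₁,…,x_n` with empirical characteristic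
function `φ̂(v) = (1/n)∑ₜ e^{ivxₜ}`,
`(1/π) ∫_ℝ (1 − |φ̂(v)|²)/v² dv = (1/n²) ∑ₜ∑ₛ |xₜ − xₛ|`. -/
theorem stmt_13 (n : ℕ) (hn : 1 ≤ n) (x : Fin n → ℝ) :
    (1 / Real.pi) * (∫ v : ℝ,
        (1 - (‖(1 / n : ℂ) * ∑ t, Complex.exp (Complex.I * ((v * x t : ℝ) : ℂ))‖) ^ 2)
          / v ^ 2)
      = (1 / (n : ℝ) ^ 2) * ∑ t, ∑ s, |x t - x s| := by
  have : Nonempty (Fin n) := ⟨⟨0, hn⟩⟩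
  have integrand_eq : ∀ v : ℝ,
      (1 - ‖(1 / n : ℂ) * ∑ t, Complex.exp (Complex.I * ((v * x t : ℝ) : ℂ))‖ ^ 2) / v ^ 2
        = 1 / (n : ℝ) ^ 2 * ∑ t, ∑ s, (1 - cos ((x t - x s) * v)) / v ^ 2 := by
    intro v
    have h := one_sub_norm_mean_exp_I_mul_sq fun t => v * x t
    rw [Fintype.card_fin] at h
    simp_rw [h, mul_div_assoc, Finset.sum_div, ← mul_sub, mul_comm v]
  have hint (t s : Fin n) := integrable_one_sub_cos_div_sq (x t - x s)
  simp_rw [integrand_eq]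
  rw [integral_const_mul,
    integral_finsetSum _ fun t _ => integrable_finsetSum _ fun s _ => hint t s]
  simp_rw [integral_finsetSum _ fun s _ => hint _ s, integral_one_sub_cos_div_sq, ← Finset.mul_sum]
  field_simp
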